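/- arXiv:1604.00691 — 2 statements merged into one kernel-verified Lean document; each statement's English description precedes it below -/
import Mathlib

section
/- Let g : ℝ × ℝ → ℝ be differentiable (arguments: state value and parameter θ), let x : ℝ × ℝ → ℝ be differentiable (arguments: parameter θ and time t), and let τ : ℝ → ℝ be differentiable at θ₀, such that g(x(θ, τ(θ)), θ) = 0 for all θ in a neighborhood of θ₀. Write g_x and g_θ for the partial derivatives of g evaluated at (x(θ₀, τ(θ₀)), θ₀), write f = ∂x/∂t(θ₀, τ(θ₀)) and x_θ = ∂x/∂θ(θ₀, τ(θ₀)), and suppose g_x · f ≠ 0. Then τ'(θ₀) = −(g_θ + g_x · x_θ) / (g_x · f). -/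
open Real Filter

/-! Differentiating the guard identity `g (x (θ, τ θ), θ) = 0` along the event-time curve by the
chain rule gives `g_θ + g_x (x_θ + τ'(θ₀) f) = 0`, which is linear in `τ'(θ₀)` with coefficient
`g_x f ≠ 0`. -/

section ChainRule

variable {𝕜 E : Type*} [NontriviallyNormedField 𝕜] [NormedAddCommGroup E] [NormedSpace 𝕜 E]
  {g : 𝕜 × 𝕜 → E} {L : 𝕜 × 𝕜 →L[𝕜] E}

theorem HasFDerivAt.hasDerivAt_comp_prodMk {u v : 𝕜 → 𝕜} {u' v' a : 𝕜}
    (hg : HasFDerivAt g L (u a, v a)) (hu : HasDerivAt u u' a) (hv : HasDerivAt v v' a) :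
    HasDerivAt (fun t => g (u t, v t)) (u' • L (1, 0) + v' • L (0, 1)) a := by
  have hL : L (u', v') = u' • L (1, 0) + v' • L (0, 1) := by
    rw [← map_smul, ← map_smul, ← map_add]
    simp
  simpa only [hL, Function.comp_def] using hg.comp_hasDerivAt a (hu.prodMk hv)

theorem HasFDerivAt.hasDerivAt_partial_fst {a b : 𝕜} (hg : HasFDerivAt g L (a, b)) :
    HasDerivAt (fun s => g (s, b)) (L (1, 0)) a := by
  simpa using hg.hasDerivAt_comp_prodMk (hasDerivAt_id' a) (hasDerivAt_const a b)

theorem HasFDerivAt.hasDerivAt_partial_snd {a b : 𝕜} (hg : HasFDerivAt g L (a, b)) :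
    HasDerivAt (fun s => g (a, s)) (L (0, 1)) b := by
  simpa using hg.hasDerivAt_comp_prodMk (hasDerivAt_const b a) (hasDerivAt_id' b)

end ChainRule

/-- IPA event-time derivative for an endogenous event: implicitly
differentiating the guard condition `g(x(θ, τ(θ)), θ) = 0` yields
`τ'(θ₀) = −(g_θ + g_x x_θ)/(g_x f)` as long as `g_x f ≠ 0`. -/
theorem endogenous_event_time_derivative
    (g : ℝ × ℝ → ℝ) (hg : Differentiable ℝ g)
    (x : ℝ × ℝ → ℝ) (hx : Differentiable ℝ x)
    (τ : ℝ → ℝ) (θ₀ : ℝ) (hτ : DifferentiableAt ℝ τ θ₀)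
    (hguard : ∀ᶠ θ in nhds θ₀, g (x (θ, τ θ), θ) = 0)
    (gx gθ f xθ : ℝ)
    (hgx : gx = deriv (fun v => g (v, θ₀)) (x (θ₀, τ θ₀)))
    (hgθ : gθ = deriv (fun θ => g (x (θ₀, τ θ₀), θ)) θ₀)
    (hf : f = deriv (fun t => x (θ₀, t)) (τ θ₀))
    (hxθ : xθ = deriv (fun θ => x (θ, τ θ₀)) θ₀)
    (hne : gx * f ≠ 0) :
    deriv τ θ₀ = -(gθ + gx * xθ) / (gx * f) := by
  have hDg := (hg (x (θ₀, τ θ₀), θ₀)).hasFDerivAt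
  have hDx := (hx (θ₀, τ θ₀)).hasFDerivAt
  rw [hgx, hDg.hasDerivAt_partial_fst.deriv] at hne ⊢
  rw [hgθ, hDg.hasDerivAt_partial_snd.deriv]
  rw [hf, hDx.hasDerivAt_partial_snd.deriv] at hne ⊢
  rw [hxθ, hDx.hasDerivAt_partial_fst.deriv]
  have htraj := hDx.hasDerivAt_comp_prodMk (hasDerivAt_id' θ₀) hτ.hasDerivAt
  have hchain := hDg.hasDerivAt_comp_prodMk htraj (hasDerivAt_id' θ₀)
  have hzero := hchain.unique ((hasDerivAt_const θ₀ 0).congr_of_eventuallyEq hguard)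
  rw [eq_div_iff hne]
  simp only [smul_eq_mul] at hzero
  linear_combination hzero
end

section
/- Let s : ℝ × ℝ → ℝ² be differentiable (arguments: parameter θ and time t), let w ∈ ℝ², r > 0, and let τ : ℝ → ℝ be differentiable at θ₀ with ‖s(θ, τ(θ)) − w‖ = r for all θ in a neighborhood of θ₀. Let u = (s(θ₀, τ(θ₀)) − w) / ‖s(θ₀, τ(θ₀)) − w‖, and suppose ⟨u, ∂s/∂t(θ₀, τ(θ₀))⟩ ≠ 0 (Euclidean inner product). Then τ'(θ₀) = −⟨u, ∂s/∂θ(θ₀, τ(θ₀))⟩ / ⟨u, ∂s/∂t(θ₀, τ(θ₀))⟩. -/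
open Real Filter
open scoped RealInnerProductSpace

/-!
Along `θ ↦ s(θ, τ θ)` the distance to `w` is locally constant, so the derivative of the squared
distance, `2 ⟪s - w, ∂s/∂θ + τ' ∂s/∂t⟫`, vanishes. Rescaling `s - w` to `u` and solving the resulting
linear equation for `τ'` gives the formula.
-/

section PartialDerivatives

variable {𝕜 F : Type*} [NontriviallyNormedField 𝕜] [NormedAddCommGroup F] [NormedSpace 𝕜 F]
  {s : 𝕜 × 𝕜 → F} {x y : 𝕜}

theorem HasFDerivAt.hasDerivAt_comp_prodMk_left {S : 𝕜 × 𝕜 →L[𝕜] F}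
    (hs : HasFDerivAt s S (x, y)) : HasDerivAt (fun a => s (a, y)) (S (1, 0)) x :=
  hs.comp_hasDerivAt x ((hasDerivAt_id x).prodMk (hasDerivAt_const x y))

theorem HasFDerivAt.hasDerivAt_comp_prodMk_right {S : 𝕜 × 𝕜 →L[𝕜] F}
    (hs : HasFDerivAt s S (x, y)) : HasDerivAt (fun b => s (x, b)) (S (0, 1)) y :=
  hs.comp_hasDerivAt y ((hasDerivAt_const y x).prodMk (hasDerivAt_id y))

theorem DifferentiableAt.hasDerivAt_comp_graph {τ : 𝕜 → 𝕜} {τ' : 𝕜}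
    (hs : DifferentiableAt 𝕜 s (x, τ x)) (hτ : HasDerivAt τ τ' x) :
    HasDerivAt (fun a => s (a, τ a))
      (deriv (fun a => s (a, τ x)) x + τ' • deriv (fun b => s (x, b)) (τ x)) x := by
  set S := fderiv 𝕜 s (x, τ x)
  have hS : HasFDerivAt s S (x, τ x) := hs.hasFDerivAt
  have hsplit : S (1, τ') = S (1, 0) + τ' • S (0, 1) := by
    rw [← map_smul, ← map_add, Prod.smul_mk, Prod.mk_add_mk, smul_zero, smul_eq_mul, mul_one,
      add_zero, zero_add]
  rw [hS.hasDerivAt_comp_prodMk_left.deriv, hS.hasDerivAt_comp_prodMk_right.deriv, ← hsplit]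
  exact hS.comp_hasDerivAt x ((hasDerivAt_id x).prodMk hτ)

end PartialDerivatives

theorem HasDerivAt.inner_eq_zero_of_eventually_norm_eq {F : Type*} [NormedAddCommGroup F]
    [InnerProductSpace ℝ F] {g : ℝ → F} {g' : F} {x r : ℝ} (hg : HasDerivAt g g' x)
    (hr : ∀ᶠ a in nhds x, ‖g a‖ = r) : ⟪g x, g'⟫ = 0 := by
  have hconst : (fun a => ‖g a‖ ^ 2) =ᶠ[nhds x] fun _ => r ^ 2 := by
    filter_upwards [hr] with a ha
    rw [ha]
  have h := hg.norm_sq.unique ((hasDerivAt_const x (r ^ 2)).congr_of_eventuallyEq hconst)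
  simpa using h

theorem visit_event_time_derivative_general
    (s : ℝ × ℝ → EuclideanSpace ℝ (Fin 2)) (hs : Differentiable ℝ s)
    (w : EuclideanSpace ℝ (Fin 2)) (r : ℝ)
    (τ : ℝ → ℝ) (θ₀ : ℝ) (hτ : DifferentiableAt ℝ τ θ₀)
    (hguard : ∀ᶠ θ in nhds θ₀, ‖s (θ, τ θ) - w‖ = r)
    (u : EuclideanSpace ℝ (Fin 2))
    (hu : u = ‖s (θ₀, τ θ₀) - w‖⁻¹ • (s (θ₀, τ θ₀) - w))
    (hne : ⟪u, deriv (fun t => s (θ₀, t)) (τ θ₀)⟫ ≠ 0) :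
    deriv τ θ₀ =
      -⟪u, deriv (fun θ => s (θ, τ θ₀)) θ₀⟫ /
        ⟪u, deriv (fun t => s (θ₀, t)) (τ θ₀)⟫ := by
  set A := deriv (fun θ => s (θ, τ θ₀)) θ₀
  set B := deriv (fun t => s (θ₀, t)) (τ θ₀)
  have hpath : HasDerivAt (fun θ => s (θ, τ θ) - w) (A + deriv τ θ₀ • B) θ₀ :=
    ((hs _).hasDerivAt_comp_graph hτ.hasDerivAt).sub_const w
  have horth : ⟪s (θ₀, τ θ₀) - w, A + deriv τ θ₀ • B⟫ = 0 :=
    hpath.inner_eq_zero_of_eventually_norm_eq hguard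
  have hu_orth : ⟪u, A⟫ + deriv τ θ₀ * ⟪u, B⟫ = 0 := by
    rw [← inner_smul_right, ← inner_add_right, hu, real_inner_smul_left, horth, mul_zero]
  rw [eq_div_iff hne]
  linarith

/-- IPA event-time derivative for the visit-ending event in the data
collection problem: implicitly differentiating the guard condition
`‖s(θ, τ(θ)) − w‖ = r` yields
`τ'(θ₀) = −⟨u, ∂s/∂θ⟩ / ⟨u, ∂s/∂t⟩` with `u = (s − w)/‖s − w‖`. -/
theorem visit_event_time_derivative
    (s : ℝ × ℝ → EuclideanSpace ℝ (Fin 2)) (hs : Differentiable ℝ s)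
    (w : EuclideanSpace ℝ (Fin 2)) (r : ℝ) (hr : 0 < r)
    (τ : ℝ → ℝ) (θ₀ : ℝ) (hτ : DifferentiableAt ℝ τ θ₀)
    (hguard : ∀ᶠ θ in nhds θ₀, ‖s (θ, τ θ) - w‖ = r)
    (u : EuclideanSpace ℝ (Fin 2))
    (hu : u = ‖s (θ₀, τ θ₀) - w‖⁻¹ • (s (θ₀, τ θ₀) - w))
    (hne : ⟪u, deriv (fun t => s (θ₀, t)) (τ θ₀)⟫ ≠ 0) :
    deriv τ θ₀ =
      -⟪u, deriv (fun θ => s (θ, τ θ₀)) θ₀⟫ /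
        ⟪u, deriv (fun t => s (θ₀, t)) (τ θ₀)⟫ :=
  visit_event_time_derivative_general s hs w r τ θ₀ hτ hguard u hu hne
end
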